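/- arXiv:2411.13248 — 6 statements merged into one kernel-verified Lean document; each statement's English description precedes it below -/
import Mathlib

section
/- Let v₁, v₂ ∈ ℝ² with |v₁| = l₁, |v₂| = l₂, l₁ ≤ l₂, and angle α ∈ (0, π/2] between them. For any t₁, t₂ ∈ (−1,1), define g(m,n) = |(t₁+m)v₁ + (t₂+n)v₂|². Then min over integers m,n of g(m,n) is attained at some pair (m,n) with |n| ≤ ⌈1/(1−cos²α)⌉ + 1 and m ∈ {⌊f(n)⌋, ⌈f(n)⌉}, where f(n) = −(t₁ + (t₂+n)·l₂·cos α / l₁). -/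
set_option maxHeartbeats 2000000

theorem aux_floor_sq_le_one (x : ℝ) : ((⌊x⌋:ℝ) - x) ^ 2 ≤ 1 := by
  have h1 : ((⌊x⌋:ℤ):ℝ) ≤ x := Int.floor_le x
  have h2 : x - 1 < ((⌊x⌋:ℤ):ℝ) := Int.sub_one_lt_floor x
  nlinarith

theorem min_attained_in_finite_range
    (v₁ v₂ : EuclideanSpace ℝ (Fin 2))
    (l₁ l₂ α : ℝ)
    (hv₁ : ‖v₁‖ = l₁) (hv₂ : ‖v₂‖ = l₂)
    (hl₁ : 0 < l₁) (hl : l₁ ≤ l₂)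
    (hα : α ∈ Set.Ioc 0 (Real.pi / 2))
    (hinner : (inner ℝ v₁ v₂ : ℝ) = l₁ * l₂ * Real.cos α)
    (t₁ t₂ : ℝ) (ht₁ : t₁ ∈ Set.Ioo (-1:ℝ) 1) (ht₂ : t₂ ∈ Set.Ioo (-1:ℝ) 1) :
    ∃ m n : ℤ,
      |n| ≤ ⌈1 / (1 - Real.cos α ^ 2)⌉ + 1 ∧
      (m = ⌊-(t₁ + (t₂ + (n:ℝ)) * l₂ * Real.cos α / l₁)⌋ ∨
        m = ⌈-(t₁ + (t₂ + (n:ℝ)) * l₂ * Real.cos α / l₁)⌉) ∧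
      ∀ m' n' : ℤ,
        ‖(t₁ + (m:ℝ)) • v₁ + (t₂ + (n:ℝ)) • v₂‖ ^ 2 ≤
          ‖(t₁ + (m':ℝ)) • v₁ + (t₂ + (n':ℝ)) • v₂‖ ^ 2 := by
  obtain ⟨hα0, hαpi⟩ := hα
  have hpi := Real.pi_pos
  set c := Real.cos α with hc
  have hc0 : 0 ≤ c := Real.cos_nonneg_of_mem_Icc ⟨by linarith, hαpi⟩
  have hc1 : c < 1 := by
    have := Real.cos_lt_cos_of_nonneg_of_le_pi (le_refl 0) (by linarith) hα0
    simpa using this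
  set s := 1 - c ^ 2 with hs
  have hs0 : 0 < s := by nlinarith
  have hs1 : s ≤ 1 := by nlinarith
  have hinvs : 1 ≤ 1 / s := by rw [le_div_iff₀ hs0]; linarith
  set f : ℤ → ℝ := fun n => -(t₁ + (t₂ + (n:ℝ)) * l₂ * c / l₁) with hf
  set N : ℤ := ⌈1 / s⌉ + 1 with hN
  have hN1 : (1:ℝ) / s + 1 ≤ (N:ℝ) := by
    have := Int.le_ceil (1 / s)
    push_cast [hN]; linarith
  have hNpos : (0:ℤ) ≤ N := by
    have : (0:ℝ) ≤ (N:ℝ) := by linarith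
    exact_mod_cast this
  set Q : ℤ → ℤ → ℝ := fun m n =>
    l₁ ^ 2 * ((m:ℝ) - f n) ^ 2 + s * l₂ ^ 2 * (t₂ + (n:ℝ)) ^ 2 with hQ
  have hG : ∀ m n : ℤ,
      ‖(t₁ + (m:ℝ)) • v₁ + (t₂ + (n:ℝ)) • v₂‖ ^ 2 = Q m n := by
    intro m n
    have h1 := norm_add_sq_real ((t₁ + (m:ℝ)) • v₁) ((t₂ + (n:ℝ)) • v₂)
    rw [h1, norm_smul, norm_smul, real_inner_smul_left, real_inner_smul_right,
      hinner, hv₁, hv₂]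
    simp only [hQ, hf, mul_pow, sq_abs, Real.norm_eq_abs]
    field_simp
    ring
  set φ : ℤ → ℝ := fun n => min (Q ⌊f n⌋ n) (Q ⌈f n⌉ n) with hφ
  have hQφ : ∀ (m n : ℤ), φ n ≤ Q m n := by
    intro m n
    have h1 : ((⌊f n⌋:ℤ):ℝ) ≤ f n := Int.floor_le _
    have h2 : f n ≤ ((⌈f n⌉:ℤ):ℝ) := Int.le_ceil _
    rcases le_or_gt m ⌊f n⌋ with h | h
    · have hm : (m:ℝ) ≤ (⌊f n⌋:ℝ) := by exact_mod_cast h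
      have hsq : ((⌊f n⌋:ℝ) - f n) ^ 2 ≤ ((m:ℝ) - f n) ^ 2 := by nlinarith
      calc φ n ≤ Q ⌊f n⌋ n := min_le_left _ _
        _ ≤ Q m n := by simp only [hQ]; nlinarith [sq_nonneg l₁]
    · have h' : ⌈f n⌉ ≤ m := by
        have := Int.ceil_le_floor_add_one (f n)
        omega
      have hm : ((⌈f n⌉:ℤ):ℝ) ≤ (m:ℝ) := by exact_mod_cast h'
      have hsq : ((⌈f n⌉:ℝ) - f n) ^ 2 ≤ ((m:ℝ) - f n) ^ 2 := by nlinarith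
      calc φ n ≤ Q ⌈f n⌉ n := min_le_right _ _
        _ ≤ Q m n := by simp only [hQ]; nlinarith [sq_nonneg l₁]
  obtain ⟨n₀, hn₀mem, hn₀min⟩ :=
    Finset.exists_min_image (Finset.Icc (-N) N) φ ⟨0, by simp [Finset.mem_Icc]; omega⟩
  obtain ⟨m₀, hm₀or, hm₀eq⟩ :
      ∃ m₀ : ℤ, (m₀ = ⌊f n₀⌋ ∨ m₀ = ⌈f n₀⌉) ∧ Q m₀ n₀ = φ n₀ := by
    rcases min_cases (Q ⌊f n₀⌋ n₀) (Q ⌈f n₀⌉ n₀) with ⟨h, _⟩ | ⟨h, _⟩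
    · exact ⟨⌊f n₀⌋, Or.inl rfl, h.symm⟩
    · exact ⟨⌈f n₀⌉, Or.inr rfl, h.symm⟩
  refine ⟨m₀, n₀, ?_, ?_, ?_⟩
  · rw [abs_le]
    have := Finset.mem_Icc.mp hn₀mem
    constructor <;> omega
  · exact hm₀or
  · intro m' n'
    rw [hG m₀ n₀, hG m' n']
    rcases le_or_gt |n'| N with hle | hgt
    · have hn'mem : n' ∈ Finset.Icc (-N) N := by
        rw [Finset.mem_Icc]; rw [abs_le] at hle; exact hle
      calc Q m₀ n₀ = φ n₀ := hm₀eq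
        _ ≤ φ n' := hn₀min n' hn'mem
        _ ≤ Q m' n' := hQφ m' n'
    · -- |n'| ≥ N + 1
      have h0mem : (0:ℤ) ∈ Finset.Icc (-N) N := by simp [Finset.mem_Icc]; omega
      have hfl : ((⌊f 0⌋:ℝ) - f 0) ^ 2 ≤ 1 := aux_floor_sq_le_one (f 0)
      have ht₂sq : t₂ ^ 2 ≤ 1 := by
        obtain ⟨h1, h2⟩ := ht₂; nlinarith
      have key1 : Q m₀ n₀ ≤ l₁ ^ 2 + s * l₂ ^ 2 := by
        calc Q m₀ n₀ = φ n₀ := hm₀eq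
          _ ≤ φ 0 := hn₀min 0 h0mem
          _ ≤ Q ⌊f 0⌋ 0 := min_le_left _ _
          _ ≤ l₁ ^ 2 + s * l₂ ^ 2 := by
              simp only [hQ, Int.cast_zero, add_zero]
              have h1 : l₁ ^ 2 * (((⌊f 0⌋:ℤ):ℝ) - f 0) ^ 2 ≤ l₁ ^ 2 * 1 :=
                mul_le_mul_of_nonneg_left hfl (sq_nonneg l₁)
              have h2 : s * l₂ ^ 2 * t₂ ^ 2 ≤ s * l₂ ^ 2 * 1 :=
                mul_le_mul_of_nonneg_left ht₂sq (by positivity)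
              linarith
      have habs : (N:ℝ) ≤ |t₂ + (n':ℝ)| := by
        have h1 : N + 1 ≤ |n'| := hgt
        have h2 : ((N:ℝ)) + 1 ≤ |(n':ℝ)| := by
          rw [← Int.cast_abs] at *
          exact_mod_cast h1
        have h3 : |(n':ℝ)| - |t₂| ≤ |t₂ + (n':ℝ)| := by
          rw [add_comm]
          have := abs_sub_abs_le_abs_sub (n':ℝ) (-t₂)
          simpa [sub_neg_eq_add, abs_neg] using this
        have h4 : |t₂| ≤ 1 := by
          rw [abs_le]; exact ⟨ht₂.1.le, ht₂.2.le⟩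
        linarith
      have hNr : (0:ℝ) ≤ (N:ℝ) := by exact_mod_cast hNpos
      have hsq : (N:ℝ) ^ 2 ≤ (t₂ + (n':ℝ)) ^ 2 := by
        have := sq_abs (t₂ + (n':ℝ))
        nlinarith [abs_nonneg (t₂ + (n':ℝ))]
      have hC : 1 + s ≤ s * (N:ℝ) ^ 2 := by
        have e1 : s * (1 / s + 1) ^ 2 = 1 / s + 2 + s := by field_simp; ring
        have e2 : s * (1 / s + 1) ^ 2 ≤ s * (N:ℝ) ^ 2 := by
          have : (1 / s + 1) ^ 2 ≤ (N:ℝ) ^ 2 := by nlinarith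
          nlinarith
        nlinarith [e1, e2, hinvs, hs0]
      have key2 : l₁ ^ 2 + s * l₂ ^ 2 ≤ Q m' n' := by
        simp only [hQ]
        have hl₂2 : l₁ ^ 2 ≤ l₂ ^ 2 := by nlinarith
        have h5 : s * l₂ ^ 2 * (N:ℝ) ^ 2 ≤ s * l₂ ^ 2 * (t₂ + (n':ℝ)) ^ 2 := by
          have : (0:ℝ) ≤ s * l₂ ^ 2 := by positivity
          nlinarith
        have h6 : l₂ ^ 2 * (1 + s) ≤ l₂ ^ 2 * (s * (N:ℝ) ^ 2) := by
          have : (0:ℝ) ≤ l₂ ^ 2 := sq_nonneg _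
          nlinarith
        nlinarith [sq_nonneg ((m':ℝ) - f n'), sq_nonneg l₁]
      linarith
end

section
/- Let v₁, v₂ ∈ ℝ² with |v₁| = l₁ ≤ l₂ = |v₂| and t₁, t₂ ∈ [0,1). Setting w = t₁v₁ + t₂v₂ and u = (t₁−1)v₁ + (t₂−1)v₂, one has min{|w|, |u|} ≤ l₂. -/
/-!
By the triangle inequality, `‖w‖ + ‖u‖ ≤ ‖v₁‖ + ‖v₂‖`, since for `t ∈ [0,1]` the pieces `t • v`
and `(t - 1) • v` have lengths adding up to `‖v‖`. Hence `min ‖w‖ ‖u‖ ≤ (l₁ + l₂) / 2 ≤ l₂`.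
-/

section

variable {E : Type*} [SeminormedAddCommGroup E] [NormedSpace ℝ E]

theorem norm_smul_add_norm_sub_one_smul {t : ℝ} (ht : t ∈ Set.Icc (0 : ℝ) 1) (v : E) :
    ‖t • v‖ + ‖(t - 1) • v‖ = ‖v‖ := by
  rw [norm_smul, norm_smul, Real.norm_of_nonneg ht.1, Real.norm_of_nonpos (by linarith [ht.2])]
  ring

theorem norm_add_norm_sub_one_smul_add_le {t₁ t₂ : ℝ} (ht₁ : t₁ ∈ Set.Icc (0 : ℝ) 1)
    (ht₂ : t₂ ∈ Set.Icc (0 : ℝ) 1) (v₁ v₂ : E) :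
    ‖t₁ • v₁ + t₂ • v₂‖ + ‖(t₁ - 1) • v₁ + (t₂ - 1) • v₂‖ ≤ ‖v₁‖ + ‖v₂‖ := by
  have h₁ := norm_smul_add_norm_sub_one_smul ht₁ v₁
  have h₂ := norm_smul_add_norm_sub_one_smul ht₂ v₂
  linarith [norm_add_le (t₁ • v₁) (t₂ • v₂), norm_add_le ((t₁ - 1) • v₁) ((t₂ - 1) • v₂)]

end

theorem min_norm_w_u_le
    (v₁ v₂ : EuclideanSpace ℝ (Fin 2))
    (l₁ l₂ : ℝ)
    (hv₁ : ‖v₁‖ = l₁) (hv₂ : ‖v₂‖ = l₂) (hl : l₁ ≤ l₂)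
    (t₁ t₂ : ℝ) (ht₁ : t₁ ∈ Set.Ico (0:ℝ) 1) (ht₂ : t₂ ∈ Set.Ico (0:ℝ) 1) :
    min ‖t₁ • v₁ + t₂ • v₂‖ ‖(t₁ - 1) • v₁ + (t₂ - 1) • v₂‖ ≤ l₂ := by
  have hsum := norm_add_norm_sub_one_smul_add_le (Set.Ico_subset_Icc_self ht₁)
    (Set.Ico_subset_Icc_self ht₂) v₁ v₂
  rw [hv₁, hv₂] at hsum
  linarith [min_le_left ‖t₁ • v₁ + t₂ • v₂‖ ‖(t₁ - 1) • v₁ + (t₂ - 1) • v₂‖,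
    min_le_right ‖t₁ • v₁ + t₂ • v₂‖ ‖(t₁ - 1) • v₁ + (t₂ - 1) • v₂‖]
end

section
/- Let v₁, v₂ ∈ ℝ² with |v₁| = l₁ ≥ 2 and angle α between them satisfying l₂ sin α ≥ 2 where l₂ = |v₂|. If p₁, p₂ are points of the flat torus T_{l₁,l₂,α} with ρ(p₁,p₂) ≠ 1, then for all integers m,n, |(x₂−x₁+m)v₁ + (y₂−y₁+n)v₂| ≠ 1. (I.e., the torus is perfectly periodic.) -/
lemma lattice_vec_big
    (v₁ v₂ : EuclideanSpace ℝ (Fin 2))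
    (l₁ l₂ α : ℝ)
    (hv₁ : ‖v₁‖ = l₁) (hv₂ : ‖v₂‖ = l₂)
    (hinner : (inner ℝ v₁ v₂ : ℝ) = l₁ * l₂ * Real.cos α)
    (hl₁ : 2 ≤ l₁) (hl₂ : 2 ≤ l₂ * Real.sin α)
    (a b : ℤ) (hab : ¬(a = 0 ∧ b = 0)) :
    2 ≤ ‖(a:ℝ) • v₁ + (b:ℝ) • v₂‖ := by
  have hsq : ‖(a:ℝ) • v₁ + (b:ℝ) • v₂‖^2
      = (a:ℝ)^2 * l₁^2 + 2*(a:ℝ)*(b:ℝ)*(l₁*l₂*Real.cos α) + (b:ℝ)^2 * l₂^2 := by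
    rw [@norm_add_sq_real]
    rw [inner_smul_left, inner_smul_right, norm_smul, norm_smul, hv₁, hv₂, hinner]
    simp [Real.norm_eq_abs, mul_pow, sq_abs]
    ring
  have hpyth := Real.sin_sq_add_cos_sq α
  have key : 4 ≤ ‖(a:ℝ) • v₁ + (b:ℝ) • v₂‖^2 := by
    rw [hsq]
    rcases eq_or_ne b 0 with hb | hb
    · have ha : a ≠ 0 := fun h => hab ⟨h, hb⟩
      have h1' : (1:ℤ) ≤ a^2 := by
        nlinarith [Int.one_le_abs ha, sq_abs a]
      have h1 : (1:ℝ) ≤ (a:ℝ)^2 := by exact_mod_cast h1'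
      subst hb
      simp only [Int.cast_zero]
      nlinarith
    · have h1' : (1:ℤ) ≤ b^2 := by
        nlinarith [Int.one_le_abs hb, sq_abs b]
      have h1 : (1:ℝ) ≤ (b:ℝ)^2 := by exact_mod_cast h1'
      have h2 : (4:ℝ) ≤ (l₂ * Real.sin α)^2 := by nlinarith
      have h3 : (4:ℝ) ≤ (b:ℝ)^2 * (l₂ * Real.sin α)^2 := by nlinarith
      have hid : (a:ℝ)^2 * l₁^2 + 2*(a:ℝ)*(b:ℝ)*(l₁*l₂*Real.cos α) + (b:ℝ)^2 * l₂^2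
          = ((a:ℝ)*l₁ + (b:ℝ)*l₂*Real.cos α)^2 + (b:ℝ)^2 * (l₂ * Real.sin α)^2 := by
        linear_combination (-(b:ℝ)^2 * l₂^2) * hpyth
      rw [hid]
      nlinarith [sq_nonneg ((a:ℝ)*l₁ + (b:ℝ)*l₂*Real.cos α)]
  nlinarith [norm_nonneg ((a:ℝ) • v₁ + (b:ℝ) • v₂)]

theorem perfectly_periodic_of_bounds
    (v₁ v₂ : EuclideanSpace ℝ (Fin 2))
    (l₁ l₂ α : ℝ)
    (hv₁ : ‖v₁‖ = l₁) (hv₂ : ‖v₂‖ = l₂)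
    (hα : α ∈ Set.Ioc 0 (Real.pi / 2))
    (hinner : (inner ℝ v₁ v₂ : ℝ) = l₁ * l₂ * Real.cos α)
    (hl₁ : 2 ≤ l₁) (hl₂ : 2 ≤ l₂ * Real.sin α)
    (x₁ y₁ x₂ y₂ : ℝ)
    (hx₁ : x₁ ∈ Set.Ico (0:ℝ) 1) (hy₁ : y₁ ∈ Set.Ico (0:ℝ) 1)
    (hx₂ : x₂ ∈ Set.Ico (0:ℝ) 1) (hy₂ : y₂ ∈ Set.Ico (0:ℝ) 1)
    (hρ : sInf {d : ℝ | ∃ m n : ℤ,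
        d = ‖(x₂ - x₁ + (m:ℝ)) • v₁ + (y₂ - y₁ + (n:ℝ)) • v₂‖} ≠ 1) :
    ∀ m n : ℤ, ‖(x₂ - x₁ + (m:ℝ)) • v₁ + (y₂ - y₁ + (n:ℝ)) • v₂‖ ≠ 1 := by
  intro m n h1
  apply hρ
  set S := {d : ℝ | ∃ m n : ℤ,
      d = ‖(x₂ - x₁ + (m:ℝ)) • v₁ + (y₂ - y₁ + (n:ℝ)) • v₂‖} with hS
  have hmem : (1:ℝ) ∈ S := ⟨m, n, h1.symm⟩
  have hlb : ∀ d ∈ S, (1:ℝ) ≤ d := by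
    rintro d ⟨m', n', rfl⟩
    rcases eq_or_ne (m', n') (m, n) with h | h
    · rw [Prod.mk.injEq] at h
      rw [h.1, h.2, h1]
    · have hab : ¬((m' - m) = 0 ∧ (n' - n) = 0) := by
        rintro ⟨h1', h2'⟩
        exact h (Prod.ext (by omega) (by omega))
      have hbig := lattice_vec_big v₁ v₂ l₁ l₂ α hv₁ hv₂ hinner hl₁ hl₂ _ _ hab
      set u := (x₂ - x₁ + (m:ℝ)) • v₁ + (y₂ - y₁ + (n:ℝ)) • v₂ with hu
      set w := ((m' - m : ℤ):ℝ) • v₁ + ((n' - n : ℤ):ℝ) • v₂ with hw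
      have hdecomp : (x₂ - x₁ + (m':ℝ)) • v₁ + (y₂ - y₁ + (n':ℝ)) • v₂ = u + w := by
        rw [hu, hw]
        push_cast
        module
      rw [hdecomp]
      have hw2 : w = (u + w) + (-u) := by module
      have h4 : ‖w‖ ≤ ‖u + w‖ + ‖u‖ := by
        calc ‖w‖ = ‖(u + w) + (-u)‖ := by rw [← hw2]
          _ ≤ ‖u + w‖ + ‖-u‖ := norm_add_le _ _
          _ = ‖u + w‖ + ‖u‖ := by rw [norm_neg]
      rw [h1] at h4
      linarith
  exact le_antisymm (csInf_le ⟨1, hlb⟩ hmem) (le_csInf ⟨1, hmem⟩ hlb)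
end

section
/- Let T be a flat torus (quotient of ℝ² by the lattice generated by v₁, v₂) that is perfectly periodic, partitioned into finitely many measurable sets F₁,…,F_n each of diameter < 1 in the torus metric ρ. Let G be a graph on vertices p₁,…,p_n with p_i ∈ F_i such that whenever (p_i,p_j) is not an edge, there are no q₁ ∈ F_i, q₂ ∈ F_j with ρ(q₁,q₂) = 1. If M is an independent set of G, then the planar set Â obtained by tiling the plane with copies of A = ⋃_{p_i ∈ M} F_i under the lattice translations is 1-avoiding, i.e., contains no two points at Euclidean distance exactly 1. -/
/-!
Two points of the tiling are lattice translates of points `q₁ ∈ F i`, `q₂ ∈ F j` with `i, j ∈ M`.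
Their torus distance `ρ q₁ q₂` is not `1`: for `i = j` because `F i` has diameter `< 1`, and for
`i ≠ j` because `i` and `j` are not adjacent. Perfect periodicity then rules out distance `1`
for every lattice translate of `q₂ - q₁`, in particular for the two points of the tiling.
-/

theorem dist_add_zsmul_add_zsmul {E : Type*} [SeminormedAddCommGroup E] [Module ℝ E]
    (v₁ v₂ q₁ q₂ : E) (m₁ n₁ m₂ n₂ : ℤ) :
    dist (q₁ + (m₁ : ℝ) • v₁ + (n₁ : ℝ) • v₂) (q₂ + (m₂ : ℝ) • v₁ + (n₂ : ℝ) • v₂) =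
      ‖q₂ - q₁ + ((m₂ - m₁ : ℤ) : ℝ) • v₁ + ((n₂ - n₁ : ℤ) : ℝ) • v₂‖ := by
  rw [dist_eq_norm, ← norm_neg]
  congr 1
  push_cast
  module

theorem ne_one_of_mem_independent {ι α : Type*} {ρ : α → α → ℝ} {F : ι → Set α}
    {Adj : ι → ι → Prop} {M : Set ι}
    (hdiam : ∀ i, ∀ q₁ ∈ F i, ∀ q₂ ∈ F i, ρ q₁ q₂ < 1)
    (hedge : ∀ i j, i ≠ j → ¬ Adj i j → ∀ q₁ ∈ F i, ∀ q₂ ∈ F j, ρ q₁ q₂ ≠ 1)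
    (hM : ∀ i ∈ M, ∀ j ∈ M, i ≠ j → ¬ Adj i j)
    {i j : ι} (hi : i ∈ M) (hj : j ∈ M) {q₁ q₂ : α} (hq₁ : q₁ ∈ F i) (hq₂ : q₂ ∈ F j) :
    ρ q₁ q₂ ≠ 1 := by
  obtain rfl | hij := eq_or_ne i j
  · exact (hdiam i q₁ hq₁ q₂ hq₂).ne
  · exact hedge i j hij (hM i hi j hj hij) q₁ hq₁ q₂ hq₂

theorem tiling_is_one_avoiding_general
    (v₁ v₂ : EuclideanSpace ℝ (Fin 2))
    (ρ : EuclideanSpace ℝ (Fin 2) → EuclideanSpace ℝ (Fin 2) → ℝ)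
    (hperf : ∀ p q, ρ p q ≠ 1 →
      ∀ m n : ℤ, ‖q - p + (m:ℝ) • v₁ + (n:ℝ) • v₂‖ ≠ 1)
    (N : ℕ) (F : Fin N → Set (EuclideanSpace ℝ (Fin 2)))
    (hdiam : ∀ i, ∀ q₁ ∈ F i, ∀ q₂ ∈ F i, ρ q₁ q₂ < 1)
    (p : Fin N → EuclideanSpace ℝ (Fin 2))
    (Adj : Fin N → Fin N → Prop)
    (hedge : ∀ i j, i ≠ j → ¬ Adj i j →
      ∀ q₁ ∈ F i, ∀ q₂ ∈ F j, ρ q₁ q₂ ≠ 1)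
    (M : Set (Fin N)) (hM : ∀ i ∈ M, ∀ j ∈ M, i ≠ j → ¬ Adj i j) :
    ∀ P ∈ (⋃ (m : ℤ) (n : ℤ) (i ∈ M),
        (fun q => q + (m:ℝ) • v₁ + (n:ℝ) • v₂) '' F i),
      ∀ Q ∈ (⋃ (m : ℤ) (n : ℤ) (i ∈ M),
        (fun q => q + (m:ℝ) • v₁ + (n:ℝ) • v₂) '' F i),
      dist P Q ≠ 1 := by
  intro P hP Q hQ
  simp only [Set.mem_iUnion, Set.mem_image] at hP hQ
  obtain ⟨m₁, n₁, i, hi, q₁, hq₁, rfl⟩ := hP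
  obtain ⟨m₂, n₂, j, hj, q₂, hq₂, rfl⟩ := hQ
  rw [dist_add_zsmul_add_zsmul]
  exact hperf q₁ q₂ (ne_one_of_mem_independent hdiam hedge hM hi hj hq₁ hq₂) _ _

theorem tiling_is_one_avoiding
    (v₁ v₂ : EuclideanSpace ℝ (Fin 2))
    (hind : LinearIndependent ℝ ![v₁, v₂])
    (ρ : EuclideanSpace ℝ (Fin 2) → EuclideanSpace ℝ (Fin 2) → ℝ)
    (hρ : ∀ p q, ρ p q =
      sInf {d : ℝ | ∃ m n : ℤ, d = ‖q - p + (m:ℝ) • v₁ + (n:ℝ) • v₂‖})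
    (hperf : ∀ p q, ρ p q ≠ 1 →
      ∀ m n : ℤ, ‖q - p + (m:ℝ) • v₁ + (n:ℝ) • v₂‖ ≠ 1)
    (N : ℕ) (F : Fin N → Set (EuclideanSpace ℝ (Fin 2)))
    (hmeas : ∀ i, MeasurableSet (F i))
    (hdiam : ∀ i, ∀ q₁ ∈ F i, ∀ q₂ ∈ F i, ρ q₁ q₂ < 1)
    (hpart : (⋃ i, F i) =
      {p | ∃ x ∈ Set.Ico (0:ℝ) 1, ∃ y ∈ Set.Ico (0:ℝ) 1, p = x • v₁ + y • v₂})
    (hdisj : Pairwise (Function.onFun Disjoint F))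
    (p : Fin N → EuclideanSpace ℝ (Fin 2)) (hp : ∀ i, p i ∈ F i)
    (Adj : Fin N → Fin N → Prop)
    (hedge : ∀ i j, i ≠ j → ¬ Adj i j →
      ∀ q₁ ∈ F i, ∀ q₂ ∈ F j, ρ q₁ q₂ ≠ 1)
    (M : Set (Fin N)) (hM : ∀ i ∈ M, ∀ j ∈ M, i ≠ j → ¬ Adj i j) :
    ∀ P ∈ (⋃ (m : ℤ) (n : ℤ) (i ∈ M),
        (fun q => q + (m:ℝ) • v₁ + (n:ℝ) • v₂) '' F i),
      ∀ Q ∈ (⋃ (m : ℤ) (n : ℤ) (i ∈ M),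
        (fun q => q + (m:ℝ) • v₁ + (n:ℝ) • v₂) '' F i),
      dist P Q ≠ 1 :=
  tiling_is_one_avoiding_general v₁ v₂ ρ hperf N F hdiam p Adj hedge M hM
end

section
/- Under the hypotheses of the graph construction lemma (perfectly periodic torus partitioned into measurable sets F₁,…,F_n of ρ-diameter < 1, graph G with the stated edge property, independent set M), the upper density of the periodic 1-avoiding set equals (Σ_{p_i ∈ M} λ₂(F_i)) / (Σ_{j=1}^n λ₂(F_j)), and hence m₁(ℝ²) ≥ (Σ_{p_i ∈ M} λ₂(F_i)) / (Σ_{j=1}^n λ₂(F_j)). -/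
open MeasureTheory

noncomputable def upperDensity (A : Set (EuclideanSpace ℝ (Fin 2))) : ℝ :=
  Filter.limsup
    (fun R : ℝ => (volume (A ∩ Metric.ball 0 R)).toReal /
      (volume (Metric.ball (0 : EuclideanSpace ℝ (Fin 2)) R)).toReal)
    Filter.atTop

noncomputable def m₁ : ℝ :=
  sSup {d : ℝ | ∃ A : Set (EuclideanSpace ℝ (Fin 2)), MeasurableSet A ∧
    (∀ p ∈ A, ∀ q ∈ A, dist p q ≠ 1) ∧ d = upperDensity A}

set_option maxHeartbeats 1000000 in
theorem density_lower_bound_from_independent_set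
    (v₁ v₂ : EuclideanSpace ℝ (Fin 2))
    (hind : LinearIndependent ℝ ![v₁, v₂])
    (ρ : EuclideanSpace ℝ (Fin 2) → EuclideanSpace ℝ (Fin 2) → ℝ)
    (hρ : ∀ p q, ρ p q =
      sInf {d : ℝ | ∃ m n : ℤ, d = ‖q - p + (m:ℝ) • v₁ + (n:ℝ) • v₂‖})
    (hperf : ∀ p q, ρ p q ≠ 1 →
      ∀ m n : ℤ, ‖q - p + (m:ℝ) • v₁ + (n:ℝ) • v₂‖ ≠ 1)
    (N : ℕ) (F : Fin N → Set (EuclideanSpace ℝ (Fin 2)))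
    (hmeas : ∀ i, MeasurableSet (F i))
    (hdiam : ∀ i, ∀ q₁ ∈ F i, ∀ q₂ ∈ F i, ρ q₁ q₂ < 1)
    (hpart : (⋃ i, F i) =
      {p | ∃ x ∈ Set.Ico (0:ℝ) 1, ∃ y ∈ Set.Ico (0:ℝ) 1, p = x • v₁ + y • v₂})
    (hdisj : Pairwise (Function.onFun Disjoint F))
    (p : Fin N → EuclideanSpace ℝ (Fin 2)) (hp : ∀ i, p i ∈ F i)
    (Adj : Fin N → Fin N → Prop)
    (hedge : ∀ i j, i ≠ j → ¬ Adj i j →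
      ∀ q₁ ∈ F i, ∀ q₂ ∈ F j, ρ q₁ q₂ ≠ 1)
    (M : Finset (Fin N)) (hM : ∀ i ∈ M, ∀ j ∈ M, i ≠ j → ¬ Adj i j) :
    upperDensity (⋃ (m : ℤ) (n : ℤ) (i ∈ M),
        (fun q => q + (m:ℝ) • v₁ + (n:ℝ) • v₂) '' F i) =
      (∑ i ∈ M, volume (F i)).toReal / (∑ j, volume (F j)).toReal ∧
    (∑ i ∈ M, volume (F i)).toReal / (∑ j, volume (F j)).toReal ≤ m₁ := by
  classical
  -- ### Setup: basis and fundamental domain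
  have hrank : Fintype.card (Fin 2) = Module.finrank ℝ (EuclideanSpace ℝ (Fin 2)) := by
    simp [finrank_euclideanSpace]
  set b : Module.Basis (Fin 2) ℝ (EuclideanSpace ℝ (Fin 2)) :=
    basisOfLinearIndependentOfCardEqFinrank hind hrank with hbdef
  have hbc : ⇑b = ![v₁, v₂] := coe_basisOfLinearIndependentOfCardEqFinrank hind hrank
  have hb0 : b 0 = v₁ := by rw [hbc]; rfl
  have hb1 : b 1 = v₂ := by rw [hbc]; rfl
  set P := ZSpan.fundamentalDomain b with hPdef
  have hPmeas : MeasurableSet P := ZSpan.fundamentalDomain_measurableSet b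
  have hPeq : P = {q | ∃ x ∈ Set.Ico (0:ℝ) 1, ∃ y ∈ Set.Ico (0:ℝ) 1, q = x • v₁ + y • v₂} := by
    ext q
    constructor
    · intro hq
      refine ⟨b.repr q 0, hq 0, b.repr q 1, hq 1, ?_⟩
      conv_lhs => rw [← b.sum_repr q]
      rw [Fin.sum_univ_two, hb0, hb1]
    · rintro ⟨x, hx, y, hy, rfl⟩
      have h : x • v₁ + y • v₂ = x • b 0 + y • b 1 := by rw [hb0, hb1]
      intro i
      rw [h]
      fin_cases i <;>
        simp [map_add, _root_.map_smul, Finsupp.single_apply, hx.1, hx.2, hy.1, hy.2]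
  -- ### The lattice
  set L := Submodule.span ℤ (Set.range ⇑b) with hLdef
  set w : ℤ × ℤ → EuclideanSpace ℝ (Fin 2) :=
    fun z => (z.1 : ℝ) • v₁ + (z.2 : ℝ) • v₂ with hwdef
  have hwmem : ∀ z, w z ∈ L := by
    intro z
    have h1 : w z = z.1 • v₁ + z.2 • v₂ := by
      simp only [hwdef, Int.cast_smul_eq_zsmul]
    rw [h1]
    exact Submodule.add_mem _ (Submodule.smul_mem _ z.1 (Submodule.subset_span ⟨0, hb0⟩))
      (Submodule.smul_mem _ z.2 (Submodule.subset_span ⟨1, hb1⟩))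
  have hwrep : ∀ v ∈ L, ∃ z, w z = v := by
    intro v hv
    rw [hLdef, Submodule.mem_span_range_iff_exists_fun] at hv
    obtain ⟨c, hc⟩ := hv
    refine ⟨(c 0, c 1), ?_⟩
    rw [← hc, Fin.sum_univ_two, hb0, hb1]
    simp only [hwdef, Int.cast_smul_eq_zsmul]
  have hwinj : Function.Injective w := by
    intro z z' h
    have hsum : ∑ i, (![((z.1 - z'.1 : ℤ) : ℝ), ((z.2 - z'.2 : ℤ) : ℝ)]) i • (![v₁, v₂]) i
        = 0 := by
      rw [Fin.sum_univ_two]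
      show ((z.1 - z'.1 : ℤ) : ℝ) • v₁ + ((z.2 - z'.2 : ℤ) : ℝ) • v₂ = 0
      have h' : w z - w z' = 0 := sub_eq_zero.mpr h
      rw [hwdef] at h'
      push_cast
      rw [sub_smul, sub_smul]
      rw [show (z.1:ℝ) • v₁ - (z'.1:ℝ) • v₁ + ((z.2:ℝ) • v₂ - (z'.2:ℝ) • v₂)
        = ((z.1:ℝ) • v₁ + (z.2:ℝ) • v₂) - ((z'.1:ℝ) • v₁ + (z'.2:ℝ) • v₂) by abel]
      exact h'
    have := Fintype.linearIndependent_iff.mp hind _ hsum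
    have h0 := this 0
    have h1 := this 1
    simp only [Matrix.cons_val_zero, Matrix.cons_val_one, Matrix.head_cons, Int.cast_eq_zero,
      sub_eq_zero] at h0 h1
    exact Prod.ext h0 h1
  -- translate uniqueness and covering
  have hPuniq : ∀ (x : EuclideanSpace ℝ (Fin 2)) (z z' : ℤ × ℤ),
      x - w z ∈ P → x - w z' ∈ P → z = z' := by
    intro x z z' h h'
    obtain ⟨v, -, huniq⟩ := ZSpan.exist_unique_vadd_mem_fundamentalDomain b x
    have e1 : (⟨-(w z), Submodule.neg_mem _ (hwmem z)⟩ : L) = v := by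
      refine huniq _ ?_
      show (-(w z) : EuclideanSpace ℝ (Fin 2)) +ᵥ x ∈ ZSpan.fundamentalDomain b
      rw [vadd_eq_add, neg_add_eq_sub]
      exact h
    have e2 : (⟨-(w z'), Submodule.neg_mem _ (hwmem z')⟩ : L) = v := by
      refine huniq _ ?_
      show (-(w z') : EuclideanSpace ℝ (Fin 2)) +ᵥ x ∈ ZSpan.fundamentalDomain b
      rw [vadd_eq_add, neg_add_eq_sub]
      exact h'
    have : -(w z) = -(w z') := by
      have := e1.trans e2.symm
      exact Subtype.ext_iff.mp this
    exact hwinj (neg_injective this)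
  have hPcover : ∀ x : EuclideanSpace ℝ (Fin 2), ∃ z, x - w z ∈ P := by
    intro x
    obtain ⟨v, hv, -⟩ := ZSpan.exist_unique_vadd_mem_fundamentalDomain b x
    obtain ⟨z, hz⟩ := hwrep (-(v : EuclideanSpace ℝ (Fin 2))) (Submodule.neg_mem _ v.2)
    refine ⟨z, ?_⟩
    rw [Submodule.vadd_def, vadd_eq_add] at hv
    rw [hz, sub_neg_eq_add, add_comm]
    exact hv
  -- ### the sets
  set A₀ : Set (EuclideanSpace ℝ (Fin 2)) := ⋃ i ∈ M, F i with hA₀def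
  have hA₀meas : MeasurableSet A₀ :=
    Set.Finite.measurableSet_biUnion M.finite_toSet (fun i _ => hmeas i)
  have hA₀sub : A₀ ⊆ P := by
    rw [hPeq, ← hpart]
    exact Set.iUnion₂_subset fun i _ => Set.subset_iUnion F i
  set a := volume A₀ with hadef
  have ha : a = ∑ i ∈ M, volume (F i) := by
    rw [hadef, hA₀def]
    exact measure_biUnion_finset (fun i _ j _ hij => hdisj hij) (fun i _ => hmeas i)
  set V := volume P with hVdef
  have hVsum : V = ∑ j, volume (F j) := by
    have h1 : volume (⋃ i, F i) = ∑' i, volume (F i) := measure_iUnion hdisj hmeas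
    rw [hVdef, hPeq, ← hpart, h1, tsum_fintype]
  have hV0 : V ≠ 0 := ZSpan.measure_fundamentalDomain_ne_zero b
  have hVtop : V ≠ ⊤ :=
    (Bornology.IsBounded.measure_lt_top (ZSpan.fundamentalDomain_isBounded b)).ne
  have hasub : a ≤ V := measure_mono hA₀sub
  have hatop : a ≠ ⊤ := (lt_of_le_of_lt hasub (lt_top_iff_ne_top.mpr hVtop)).ne
  -- bound on the fundamental domain
  set c : ℝ := ‖v₁‖ + ‖v₂‖ with hcdef
  have hc0 : 0 ≤ c := by positivity
  have hPnorm : ∀ y ∈ P, ‖y‖ ≤ c := by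
    intro y hy
    rw [hPeq] at hy
    obtain ⟨α, hα, β, hβ, rfl⟩ := hy
    calc ‖α • v₁ + β • v₂‖ ≤ ‖α • v₁‖ + ‖β • v₂‖ := norm_add_le _ _
      _ = |α| * ‖v₁‖ + |β| * ‖v₂‖ := by rw [norm_smul, norm_smul, Real.norm_eq_abs,
          Real.norm_eq_abs]
      _ ≤ 1 * ‖v₁‖ + 1 * ‖v₂‖ := by
          gcongr
          · rw [abs_of_nonneg hα.1]; exact hα.2.le
          · rw [abs_of_nonneg hβ.1]; exact hβ.2.le
      _ = c := by rw [hcdef]; ring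
  -- translates
  set T : ℤ × ℤ → Set (EuclideanSpace ℝ (Fin 2)) := fun z => (fun q => q + w z) '' A₀
    with hTdef
  set Q : ℤ × ℤ → Set (EuclideanSpace ℝ (Fin 2)) := fun z => (fun q => q + w z) '' P
    with hQdef
  have himg : ∀ (S : Set (EuclideanSpace ℝ (Fin 2))) (u : EuclideanSpace ℝ (Fin 2)),
      (fun q => q + u) '' S = (fun q => q - u) ⁻¹' S := by
    intro S u
    ext x
    constructor
    · rintro ⟨s, hs, rfl⟩
      simpa [Set.mem_preimage] using hs
    · intro hx
      exact ⟨x - u, hx, by simp⟩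
  have hvol_translate : ∀ (S : Set (EuclideanSpace ℝ (Fin 2))) (u : EuclideanSpace ℝ (Fin 2)),
      volume ((fun q => q + u) '' S) = volume S := by
    intro S u
    rw [himg]
    have : (fun q : EuclideanSpace ℝ (Fin 2) => q - u) = fun q => q + (-u) := by
      funext q; rw [sub_eq_add_neg]
    rw [this]
    exact measure_preimage_add_right volume (-u) S
  have hTmeas : ∀ z, MeasurableSet (T z) := by
    intro z
    show MeasurableSet ((fun q => q + w z) '' A₀)
    rw [himg]
    exact hA₀meas.preimage (measurable_id.sub_const _)
  have hQmeas : ∀ z, MeasurableSet (Q z) := by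
    intro z
    show MeasurableSet ((fun q => q + w z) '' P)
    rw [himg]
    exact hPmeas.preimage (measurable_id.sub_const _)
  have hTvol : ∀ z, volume (T z) = a := fun z => hvol_translate A₀ (w z)
  have hQvol : ∀ z, volume (Q z) = V := fun z => hvol_translate P (w z)
  have hTsubQ : ∀ z, T z ⊆ Q z := fun z => Set.image_mono hA₀sub
  have hQdisj : Pairwise (Function.onFun Disjoint Q) := by
    intro z z' hzz'
    refine Set.disjoint_left.mpr ?_
    rintro x ⟨s, hs, hex⟩ ⟨s', hs', hex'⟩
    refine hzz' (hPuniq x z z' ?_ ?_)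
    · rw [← hex]; simpa using hs
    · rw [← hex']; simpa using hs'
  have hTdisj : Pairwise (Function.onFun Disjoint T) := fun z z' h =>
    ((hQdisj h).mono (hTsubQ z) (hTsubQ z'))
  have hQcover : (⋃ z, Q z) = Set.univ := by
    ext x
    simp only [Set.mem_iUnion, Set.mem_univ, iff_true]
    obtain ⟨z, hz⟩ := hPcover x
    exact ⟨z, x - w z, hz, by simp⟩
  -- identification of the big union
  set Ahat := ⋃ z, T z with hAhatdef
  have hAhat : (⋃ (m : ℤ) (n : ℤ) (i ∈ M),
      (fun q => q + (m:ℝ) • v₁ + (n:ℝ) • v₂) '' F i) = Ahat := by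
    apply Set.Subset.antisymm
    · refine Set.iUnion_subset fun m => Set.iUnion_subset fun n => Set.iUnion_subset fun i =>
        Set.iUnion_subset fun hi => ?_
      rintro x ⟨q, hq, rfl⟩
      refine Set.mem_iUnion.mpr ⟨(m, n), ⟨q, Set.mem_biUnion hi hq, ?_⟩⟩
      show q + ((m:ℝ) • v₁ + (n:ℝ) • v₂) = q + (m:ℝ) • v₁ + (n:ℝ) • v₂
      abel
    · refine Set.iUnion_subset fun z => ?_
      rintro x ⟨q, hq, rfl⟩
      obtain ⟨i, hi, hqi⟩ : ∃ i ∈ M, q ∈ F i := by simpa [hA₀def] using hq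
      refine Set.mem_iUnion.mpr ⟨z.1, Set.mem_iUnion.mpr ⟨z.2, Set.mem_iUnion.mpr ⟨i,
        Set.mem_iUnion.mpr ⟨hi, ⟨q, hqi, ?_⟩⟩⟩⟩⟩
      show q + (z.1:ℝ) • v₁ + (z.2:ℝ) • v₂ = q + ((z.1:ℝ) • v₁ + (z.2:ℝ) • v₂)
      abel
  have hAhatmeas : MeasurableSet Ahat := MeasurableSet.iUnion hTmeas
  -- measure in balls as sums
  have hAB : ∀ R : ℝ, volume (Ahat ∩ Metric.ball 0 R)
      = ∑' z, volume (T z ∩ Metric.ball 0 R) := by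
    intro R
    rw [hAhatdef, Set.iUnion_inter]
    exact measure_iUnion
      (fun z z' h => ((hTdisj h).mono Set.inter_subset_left Set.inter_subset_left))
      (fun z => (hTmeas z).inter measurableSet_ball)
  have hBall : ∀ R : ℝ, volume (Metric.ball (0 : EuclideanSpace ℝ (Fin 2)) R)
      = ∑' z, volume (Q z ∩ Metric.ball 0 R) := by
    intro R
    conv_lhs => rw [← Set.univ_inter (Metric.ball _ R), ← hQcover, Set.iUnion_inter]
    exact measure_iUnion
      (fun z z' h => ((hQdisj h).mono Set.inter_subset_left Set.inter_subset_left))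
      (fun z => (hQmeas z).inter measurableSet_ball)
  -- key pointwise bounds
  have hkey_up : ∀ (R : ℝ) (z : ℤ × ℤ), V * volume (T z ∩ Metric.ball 0 R)
      ≤ a * volume (Q z ∩ Metric.ball 0 (R + 2*c)) := by
    intro R z
    rcases Set.eq_empty_or_nonempty (T z ∩ Metric.ball 0 R) with he | ⟨x, hx⟩
    · rw [he]; simp
    · obtain ⟨hxT, hxb⟩ := hx
      obtain ⟨s, hs, rfl⟩ := hxT
      have h1 : ‖s + w z‖ < R := by simpa [mem_ball_zero_iff] using hxb
      have h2 : ‖s‖ ≤ c := hPnorm s (hA₀sub hs)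
      have hwz : ‖w z‖ < R + c := by
        have : ‖w z‖ ≤ ‖s + w z‖ + ‖s‖ := by
          calc ‖w z‖ = ‖(s + w z) - s‖ := by rw [add_sub_cancel_left]
            _ ≤ ‖s + w z‖ + ‖s‖ := norm_sub_le _ _
        linarith
      have hQsub : Q z ⊆ Metric.ball 0 (R + 2*c) := by
        rintro x ⟨y, hy, rfl⟩
        rw [mem_ball_zero_iff]
        have hyc : ‖y‖ ≤ c := hPnorm y hy
        calc ‖y + w z‖ ≤ ‖y‖ + ‖w z‖ := norm_add_le _ _
          _ < c + (R + c) := by linarith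
          _ = R + 2*c := by ring
      rw [Set.inter_eq_self_of_subset_left hQsub, hQvol z]
      calc V * volume (T z ∩ Metric.ball 0 R) ≤ V * volume (T z) :=
            mul_le_mul_right (measure_mono Set.inter_subset_left) V
        _ = V * a := by rw [hTvol]
        _ = a * V := mul_comm _ _
  have hkey_lo : ∀ (R : ℝ) (z : ℤ × ℤ), a * volume (Q z ∩ Metric.ball 0 (R - 2*c))
      ≤ V * volume (T z ∩ Metric.ball 0 R) := by
    intro R z
    rcases Set.eq_empty_or_nonempty (Q z ∩ Metric.ball 0 (R - 2*c)) with he | ⟨x, hx⟩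
    · rw [he]; simp
    · obtain ⟨hxQ, hxb⟩ := hx
      obtain ⟨y, hy, rfl⟩ := hxQ
      have h1 : ‖y + w z‖ < R - 2*c := by simpa [mem_ball_zero_iff] using hxb
      have h2 : ‖y‖ ≤ c := hPnorm y hy
      have hwz : ‖w z‖ < R - c := by
        have : ‖w z‖ ≤ ‖y + w z‖ + ‖y‖ := by
          calc ‖w z‖ = ‖(y + w z) - y‖ := by rw [add_sub_cancel_left]
            _ ≤ ‖y + w z‖ + ‖y‖ := norm_sub_le _ _
        linarith
      have hTsub : T z ⊆ Metric.ball 0 R := by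
        rintro x ⟨s, hs, rfl⟩
        rw [mem_ball_zero_iff]
        have hsc : ‖s‖ ≤ c := hPnorm s (hA₀sub hs)
        calc ‖s + w z‖ ≤ ‖s‖ + ‖w z‖ := norm_add_le _ _
          _ < c + (R - c) := by linarith
          _ = R := by ring
      rw [Set.inter_eq_self_of_subset_left hTsub, hTvol z]
      calc a * volume (Q z ∩ Metric.ball 0 (R - 2*c)) ≤ a * volume (Q z) :=
            mul_le_mul_right (measure_mono Set.inter_subset_left) a
        _ = a * V := by rw [hQvol]
        _ = V * a := mul_comm _ _
  -- summed bounds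
  have hup : ∀ R : ℝ, V * volume (Ahat ∩ Metric.ball 0 R)
      ≤ a * volume (Metric.ball (0 : EuclideanSpace ℝ (Fin 2)) (R + 2*c)) := by
    intro R
    rw [hAB R, hBall (R + 2*c), ← ENNReal.tsum_mul_left, ← ENNReal.tsum_mul_left]
    exact ENNReal.tsum_le_tsum fun z => hkey_up R z
  have hlo : ∀ R : ℝ, a * volume (Metric.ball (0 : EuclideanSpace ℝ (Fin 2)) (R - 2*c))
      ≤ V * volume (Ahat ∩ Metric.ball 0 R) := by
    intro R
    rw [hAB R, hBall (R - 2*c), ← ENNReal.tsum_mul_left, ← ENNReal.tsum_mul_left]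
    exact ENNReal.tsum_le_tsum fun z => hkey_lo R z
  -- ### real-valued estimates
  have hXfin : ∀ R : ℝ, volume (Ahat ∩ Metric.ball 0 R) ≠ ⊤ := fun R =>
    (lt_of_le_of_lt (measure_mono Set.inter_subset_right) measure_ball_lt_top).ne
  set K : ℝ := (volume (Metric.ball (0 : EuclideanSpace ℝ (Fin 2)) 1)).toReal with hKdef
  have hK0 : 0 < K := ENNReal.toReal_pos (Metric.measure_ball_pos volume 0 one_pos).ne'
    measure_ball_lt_top.ne
  have hballvol : ∀ r : ℝ, 0 ≤ r →
      (volume (Metric.ball (0 : EuclideanSpace ℝ (Fin 2)) r)).toReal = r^2 * K := by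
    intro r hr
    rw [Measure.addHaar_ball volume 0 hr, ENNReal.toReal_mul,
      ENNReal.toReal_ofReal (by positivity), finrank_euclideanSpace, Fintype.card_fin]
  set Vr := V.toReal with hVrdef
  set ar := a.toReal with hardef
  have hVr0 : 0 < Vr := ENNReal.toReal_pos hV0 hVtop
  have har0 : 0 ≤ ar := ENNReal.toReal_nonneg
  have hfhi : ∀ R : ℝ, 2*c + 1 ≤ R →
      (volume (Ahat ∩ Metric.ball 0 R)).toReal /
        (volume (Metric.ball (0 : EuclideanSpace ℝ (Fin 2)) R)).toReal
      ≤ (ar/Vr) * ((R + 2*c)^2/R^2) := by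
    intro R hR
    have hRpos : 0 < R := by linarith
    have h := hup R
    have hfin : a * volume (Metric.ball (0 : EuclideanSpace ℝ (Fin 2)) (R + 2*c)) ≠ ⊤ :=
      ENNReal.mul_ne_top hatop measure_ball_lt_top.ne
    have hre : Vr * (volume (Ahat ∩ Metric.ball 0 R)).toReal
        ≤ ar * ((R + 2*c)^2 * K) := by
      rw [← hballvol (R + 2*c) (by linarith), ← ENNReal.toReal_mul, ← ENNReal.toReal_mul]
      exact ENNReal.toReal_mono hfin h
    have hXnn : (0:ℝ) ≤ (volume (Ahat ∩ Metric.ball 0 R)).toReal := ENNReal.toReal_nonneg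
    rw [hballvol R hRpos.le, div_mul_div_comm, div_le_div_iff₀ (by positivity) (by positivity)]
    nlinarith [mul_le_mul_of_nonneg_right hre (sq_nonneg R), hK0, sq_nonneg (R + 2*c)]
  have hflo : ∀ R : ℝ, 2*c + 1 ≤ R →
      (ar/Vr) * ((R - 2*c)^2/R^2)
      ≤ (volume (Ahat ∩ Metric.ball 0 R)).toReal /
        (volume (Metric.ball (0 : EuclideanSpace ℝ (Fin 2)) R)).toReal := by
    intro R hR
    have hRpos : 0 < R := by linarith
    have h := hlo R
    have hfin : V * volume (Ahat ∩ Metric.ball 0 R) ≠ ⊤ :=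
      ENNReal.mul_ne_top hVtop (hXfin R)
    have hre : ar * ((R - 2*c)^2 * K) ≤ Vr * (volume (Ahat ∩ Metric.ball 0 R)).toReal := by
      rw [← hballvol (R - 2*c) (by linarith), ← ENNReal.toReal_mul, ← ENNReal.toReal_mul]
      exact ENNReal.toReal_mono hfin h
    have hXnn : (0:ℝ) ≤ (volume (Ahat ∩ Metric.ball 0 R)).toReal := ENNReal.toReal_nonneg
    rw [hballvol R hRpos.le, div_mul_div_comm, div_le_div_iff₀ (by positivity) (by positivity)]
    nlinarith [mul_le_mul_of_nonneg_right hre (sq_nonneg R), hK0]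
  -- limits of bounding functions
  have hratio : ∀ d : ℝ, Filter.Tendsto (fun R : ℝ => (ar/Vr) * ((R + d)^2/R^2))
      Filter.atTop (nhds (ar/Vr)) := by
    intro d
    have h1 : Filter.Tendsto (fun R : ℝ => (1 + d/R)^2) Filter.atTop (nhds 1) := by
      have h2 : Filter.Tendsto (fun R : ℝ => 1 + d/R) Filter.atTop (nhds 1) := by
        have h3 : Filter.Tendsto (fun R : ℝ => d/R) Filter.atTop (nhds 0) := by
          simpa [div_eq_mul_inv] using tendsto_inv_atTop_zero.const_mul d
        simpa using Filter.Tendsto.const_add 1 h3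
      have := h2.pow 2
      simpa using this
    have heq : ∀ᶠ R : ℝ in Filter.atTop, (1 + d/R)^2 = (R + d)^2/R^2 := by
      filter_upwards [Filter.eventually_gt_atTop 0] with R hR
      rw [← div_pow]
      congr 1
      field_simp
    have h4 : Filter.Tendsto (fun R : ℝ => (R + d)^2/R^2) Filter.atTop (nhds 1) :=
      h1.congr' heq
    simpa using h4.const_mul (ar/Vr)
  have hTend : Filter.Tendsto
      (fun R : ℝ => (volume (Ahat ∩ Metric.ball 0 R)).toReal /
        (volume (Metric.ball (0 : EuclideanSpace ℝ (Fin 2)) R)).toReal)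
      Filter.atTop (nhds (ar/Vr)) := by
    refine tendsto_of_tendsto_of_tendsto_of_le_of_le'
      ((by simpa [sub_eq_add_neg] using hratio (-(2*c))) : Filter.Tendsto
        (fun R : ℝ => (ar/Vr) * ((R - 2*c)^2/R^2)) Filter.atTop (nhds (ar/Vr)))
      (hratio (2*c)) ?_ ?_
    · filter_upwards [Filter.eventually_ge_atTop (2*c + 1)] with R hR
      exact hflo R hR
    · filter_upwards [Filter.eventually_ge_atTop (2*c + 1)] with R hR
      exact hfhi R hR
  have part1 : upperDensity Ahat = ar / Vr := hTend.limsup_eq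
  have hratio_eq : ar / Vr = (∑ i ∈ M, volume (F i)).toReal / (∑ j, volume (F j)).toReal := by
    rw [hardef, hVrdef, ha, hVsum]
  -- ### the set is 1-avoiding
  have havoid : ∀ p' ∈ Ahat, ∀ q' ∈ Ahat, dist p' q' ≠ 1 := by
    intro p' hp' q' hq'
    rw [hAhatdef] at hp' hq'
    simp only [Set.mem_iUnion, hTdef, Set.mem_image] at hp' hq'
    obtain ⟨z, s, hs, rfl⟩ := hp'
    obtain ⟨z', t, ht, rfl⟩ := hq'
    rw [hA₀def] at hs ht
    simp only [Set.mem_iUnion, exists_prop] at hs ht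
    obtain ⟨i, hi, hsi⟩ := hs
    obtain ⟨j, hj, htj⟩ := ht
    have hρ1 : ρ t s ≠ 1 := by
      rcases eq_or_ne j i with rfl | hij
      · exact ne_of_lt (hdiam j t htj s hsi)
      · exact hedge j i hij (hM j hj i hi hij) t htj s hsi
    have hkey := hperf t s hρ1 (z.1 - z'.1) (z.2 - z'.2)
    rw [dist_eq_norm]
    intro hcon
    apply hkey
    rw [← hcon]
    congr 1
    rw [hwdef]
    simp only
    push_cast
    module
  -- ### conclusion
  have hone : ∀ d ∈ {d : ℝ | ∃ A : Set (EuclideanSpace ℝ (Fin 2)), MeasurableSet A ∧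
      (∀ p ∈ A, ∀ q ∈ A, dist p q ≠ 1) ∧ d = upperDensity A}, d ≤ 1 := by
    rintro d ⟨A, hA, -, rfl⟩
    have h1 : ∀ R : ℝ, (volume (A ∩ Metric.ball 0 R)).toReal /
        (volume (Metric.ball (0 : EuclideanSpace ℝ (Fin 2)) R)).toReal ≤ 1 := by
      intro R
      apply div_le_one_of_le₀
      · exact ENNReal.toReal_mono measure_ball_lt_top.ne (measure_mono Set.inter_subset_right)
      · exact ENNReal.toReal_nonneg
    exact Filter.limsup_le_of_le
      (Filter.isCoboundedUnder_le_of_le _ (x := 0) (fun R => by positivity))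
      (Filter.Eventually.of_forall h1)
  have hbdd : BddAbove {d : ℝ | ∃ A : Set (EuclideanSpace ℝ (Fin 2)), MeasurableSet A ∧
      (∀ p ∈ A, ∀ q ∈ A, dist p q ≠ 1) ∧ d = upperDensity A} := ⟨1, hone⟩
  have hmem : (∑ i ∈ M, volume (F i)).toReal / (∑ j, volume (F j)).toReal ∈
      {d : ℝ | ∃ A : Set (EuclideanSpace ℝ (Fin 2)), MeasurableSet A ∧
      (∀ p ∈ A, ∀ q ∈ A, dist p q ≠ 1) ∧ d = upperDensity A} :=
    ⟨Ahat, hAhatmeas, havoid, by rw [part1, hratio_eq]⟩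
  constructor
  · rw [hAhat, part1, hratio_eq]
  · exact le_csSup hbdd hmem
end

section
/- In Croft's construction, the 'tortoise' is the intersection of an open disc of radius 1/2 with a concentric open regular hexagon of height x < 1 (distance between opposite sides equal to x), with hexagon sides perpendicular to the directions of the nearest lattice points. Copies of the tortoise placed at the points of a hexagonal lattice with basis vectors of length 1 + x form a 1-avoiding set: any two points in distinct copies are at distance ≠ 1 and any two points in the same copy are at distance < 1. -/
private lemma quadform_cases (m n : ℤ) (h : ¬(m = 0 ∧ n = 0)) :
    (m = 1 ∧ n = 0) ∨ (m = -1 ∧ n = 0) ∨ (m = 0 ∧ n = 1) ∨ (m = 0 ∧ n = -1) ∨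
    (m = 1 ∧ n = -1) ∨ (m = -1 ∧ n = 1) ∨ 3 ≤ m^2 + m*n + n^2 := by
  rcases le_or_gt 2 |m| with hm | hm
  · have : 4 ≤ m^2 := by nlinarith [sq_abs m, abs_nonneg m]
    right; right; right; right; right; right
    nlinarith [sq_nonneg (2*n + m)]
  · rcases le_or_gt 2 |n| with hn | hn
    · have : 4 ≤ n^2 := by nlinarith [sq_abs n, abs_nonneg n]
      right; right; right; right; right; right
      nlinarith [sq_nonneg (2*m + n)]
    · have hm1 : -1 ≤ m ∧ m ≤ 1 := abs_le.mp (by omega)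
      have hn1 : -1 ≤ n ∧ n ≤ 1 := abs_le.mp (by omega)
      obtain ⟨hm1, hm2⟩ := hm1; obtain ⟨hn1, hn2⟩ := hn1
      interval_cases m <;> interval_cases n <;> simp_all

private lemma case_near {E : Type*} [NormedAddCommGroup E] [InnerProductSpace ℝ E]
    (e s : E) (x : ℝ) (hx : 0 < x)
    (he : ‖e‖ = 1 + x) (hes : -(x*(1+x)) < (inner ℝ s e : ℝ)) :
    1 < ‖e + s‖ := by
  have h1 : (inner ℝ (e+s) e : ℝ) = (1+x)^2 + (inner ℝ s e : ℝ) := by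
    rw [inner_add_left, real_inner_self_eq_norm_sq, he]
  have h2 : (inner ℝ (e+s) e : ℝ) ≤ ‖e+s‖ * ‖e‖ := real_inner_le_norm _ _
  rw [he] at h2
  nlinarith [norm_nonneg (e+s)]

private lemma hex_bound (P Q h : ℝ) (h0 : 0 ≤ h) (h1 : |P| ≤ h) (h2 : |Q| ≤ h)
    (h3 : |P - Q| ≤ h) : P^2 - P*Q + Q^2 ≤ h^2 := by
  obtain ⟨h1a, h1b⟩ := abs_le.mp h1
  obtain ⟨h2a, h2b⟩ := abs_le.mp h2
  obtain ⟨h3a, h3b⟩ := abs_le.mp h3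
  rcases le_total 0 P with hP | hP <;> rcases le_total 0 Q with hQ | hQ <;>
    rcases le_total P Q with hPQ | hPQ <;>
  nlinarith [mul_nonneg (sub_nonneg.2 h1b) (sub_nonneg.2 (neg_le.mp h1a)),
    mul_nonneg (sub_nonneg.2 h2b) (sub_nonneg.2 (neg_le.mp h2a)),
    mul_nonneg (sub_nonneg.2 h3b) (sub_nonneg.2 (neg_le.mp h3a))]

private lemma tortoise_norm_sq {u w t : EuclideanSpace ℝ (Fin 2)} {x : ℝ}
    (hind : LinearIndependent ℝ ![u, w]) (hx : 0 < x)
    (huu : (inner ℝ u u : ℝ) = (1+x)^2) (hww : (inner ℝ w w : ℝ) = (1+x)^2)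
    (hvw : (inner ℝ u w : ℝ) = (1+x)^2/2)
    (h1 : |(inner ℝ t u : ℝ)| ≤ x*(1+x)/2)
    (h2 : |(inner ℝ t w : ℝ)| ≤ x*(1+x)/2)
    (h3 : |(inner ℝ t (w-u) : ℝ)| ≤ x*(1+x)/2) :
    ‖t‖^2 ≤ x^2/3 := by
  have hL : (0:ℝ) < 1 + x := by linarith
  have hspan := hind.span_eq_top_of_card_eq_finrank (by simp)
  have ht : t ∈ Submodule.span ℝ (Set.range ![u, w]) := hspan ▸ Submodule.mem_top
  rw [show Set.range ![u, w] = {u, w} by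
    simp [Matrix.range_cons, Matrix.range_empty, Set.pair_comm]] at ht
  obtain ⟨α, β, rfl⟩ := Submodule.mem_span_pair.mp ht
  set t := α • u + β • w with htdef
  have hwu : (inner ℝ w u : ℝ) = (1+x)^2/2 := by rw [real_inner_comm]; exact hvw
  have hc1 : (inner ℝ t u : ℝ) = (1+x)^2 * (α + β/2) := by
    rw [htdef, inner_add_left, real_inner_smul_left, real_inner_smul_left, huu, hwu]; ring
  have hc2 : (inner ℝ t w : ℝ) = (1+x)^2 * (α/2 + β) := by
    rw [htdef, inner_add_left, real_inner_smul_left, real_inner_smul_left, hvw, hww]; ring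
  have htt : ‖t‖^2 = (1+x)^2 * (α^2 + α*β + β^2) := by
    rw [← real_inner_self_eq_norm_sq, htdef, inner_add_left, inner_add_right, inner_add_right,
      real_inner_smul_left, real_inner_smul_left, real_inner_smul_left, real_inner_smul_left,
      real_inner_smul_right, real_inner_smul_right, real_inner_smul_right, real_inner_smul_right,
      huu, hww, hvw, hwu]; ring
  have h3' : |(inner ℝ t w : ℝ) - (inner ℝ t u : ℝ)| ≤ x*(1+x)/2 := by
    have h3'' := h3
    rw [inner_sub_right] at h3''
    exact h3''
  have key := hex_bound ((inner ℝ t u : ℝ)) ((inner ℝ t w : ℝ)) (x*(1+x)/2)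
    (by positivity) h1 h2 (by rwa [abs_sub_comm] at h3')
  rw [hc1, hc2] at key
  rw [htt]
  nlinarith [sq_nonneg (1+x), mul_pos hL hL, key]

private lemma croft_key (u w : EuclideanSpace ℝ (Fin 2)) (x : ℝ) (hx : 0 < x)
    (hu : ‖u‖ = 1 + x) (hw : ‖w‖ = 1 + x)
    (hvw : (inner ℝ u w : ℝ) = (1+x)^2/2)
    (m n : ℤ) (hmn : ¬(m = 0 ∧ n = 0)) (s : EuclideanSpace ℝ (Fin 2))
    (hsu : |(inner ℝ s u : ℝ)| < x*(1+x)) (hsw : |(inner ℝ s w : ℝ)| < x*(1+x))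
    (hswu : |(inner ℝ s (w-u) : ℝ)| < x*(1+x)) (hs : Real.sqrt 3 * ‖s‖ ≤ 2*x) :
    1 < ‖((m:ℝ) • u + (n:ℝ) • w) + s‖ := by
  have hL : (0:ℝ) < 1 + x := by linarith
  have huu : (inner ℝ u u : ℝ) = (1+x)^2 := by rw [real_inner_self_eq_norm_sq, hu]
  have hww : (inner ℝ w w : ℝ) = (1+x)^2 := by rw [real_inner_self_eq_norm_sq, hw]
  have hwu : (inner ℝ w u : ℝ) = (1+x)^2/2 := by rw [real_inner_comm]; exact hvw
  have hwmu : ‖w - u‖ = 1 + x := by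
    have hsq : ‖w - u‖^2 = (1+x)^2 := by
      rw [← real_inner_self_eq_norm_sq, inner_sub_left, inner_sub_right, inner_sub_right,
        huu, hww, hvw, hwu]; ring
    have := congrArg Real.sqrt hsq
    rwa [Real.sqrt_sq (norm_nonneg _), Real.sqrt_sq hL.le] at this
  obtain ⟨hsu1, hsu2⟩ := abs_lt.mp hsu
  obtain ⟨hsw1, hsw2⟩ := abs_lt.mp hsw
  obtain ⟨hswu1, hswu2⟩ := abs_lt.mp hswu
  rcases quadform_cases m n hmn with ⟨rfl, rfl⟩ | ⟨rfl, rfl⟩ | ⟨rfl, rfl⟩ | ⟨rfl, rfl⟩ |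
    ⟨rfl, rfl⟩ | ⟨rfl, rfl⟩ | hk
  · rw [show (((1:ℤ):ℝ) • u + ((0:ℤ):ℝ) • w) + s = u + s by push_cast; module]
    exact case_near u s x hx hu (by linarith)
  · rw [show ((((-1):ℤ):ℝ) • u + ((0:ℤ):ℝ) • w) + s = (-u) + s by push_cast; module]
    refine case_near (-u) s x hx (by rwa [norm_neg]) ?_
    rw [inner_neg_right]; linarith
  · rw [show (((0:ℤ):ℝ) • u + ((1:ℤ):ℝ) • w) + s = w + s by push_cast; module]
    exact case_near w s x hx hw (by linarith)
  · rw [show (((0:ℤ):ℝ) • u + (((-1):ℤ):ℝ) • w) + s = (-w) + s by push_cast; module]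
    refine case_near (-w) s x hx (by rwa [norm_neg]) ?_
    rw [inner_neg_right]; linarith
  · rw [show (((1:ℤ):ℝ) • u + (((-1):ℤ):ℝ) • w) + s = (-(w-u)) + s by push_cast; module]
    refine case_near (-(w-u)) s x hx (by rwa [norm_neg]) ?_
    rw [inner_neg_right]; linarith
  · rw [show ((((-1):ℤ):ℝ) • u + ((1:ℤ):ℝ) • w) + s = (w-u) + s by push_cast; module]
    exact case_near (w-u) s x hx hwmu (by linarith)
  · set d : EuclideanSpace ℝ (Fin 2) := (m:ℝ) • u + (n:ℝ) • w with hd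
    have hd2 : ‖d‖^2 = ((m:ℝ)^2 + (m:ℝ)*(n:ℝ) + (n:ℝ)^2) * (1+x)^2 := by
      rw [← real_inner_self_eq_norm_sq, hd, inner_add_left, inner_add_right, inner_add_right,
        real_inner_smul_left, real_inner_smul_left, real_inner_smul_left, real_inner_smul_left,
        real_inner_smul_right, real_inner_smul_right, real_inner_smul_right, real_inner_smul_right,
        huu, hww, hvw, hwu]; ring
    have hk' : (3:ℝ) ≤ (m:ℝ)^2 + (m:ℝ)*(n:ℝ) + (n:ℝ)^2 := by
      exact_mod_cast (by exact_mod_cast hk : (3:ℝ) ≤ ((m^2 + m*n + n^2 : ℤ):ℝ))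
    have s3 : (0:ℝ) ≤ Real.sqrt 3 := Real.sqrt_nonneg 3
    have s3sq : Real.sqrt 3 ^ 2 = 3 := Real.sq_sqrt (by norm_num)
    have hdge : Real.sqrt 3 * (1+x) ≤ ‖d‖ := by
      apply le_of_pow_le_pow_left₀ two_ne_zero (norm_nonneg d)
      rw [hd2, mul_pow, s3sq]
      nlinarith [sq_nonneg (1+x)]
    have htri : ‖d‖ - ‖s‖ ≤ ‖d + s‖ := by
      have := norm_add_le (d + s) (-s)
      simp only [add_neg_cancel_right, norm_neg] at this
      linarith
    have hs3lt2 : Real.sqrt 3 < 2 := by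
      rw [show (2:ℝ) = Real.sqrt 4 by rw [show (4:ℝ) = 2^2 by norm_num, Real.sqrt_sq]; norm_num]
      exact Real.sqrt_lt_sqrt (by norm_num) (by norm_num)
    have h1 : Real.sqrt 3 * ‖d + s‖ ≥ Real.sqrt 3 * (‖d‖ - ‖s‖) := by
      apply mul_le_mul_of_nonneg_left htri s3
    have h2 : Real.sqrt 3 * ‖d‖ ≥ 3 * (1+x) := by
      have e2 := mul_le_mul_of_nonneg_left hdge s3
      have e3 : Real.sqrt 3 * (Real.sqrt 3 * (1+x)) = 3 * (1+x) := by
        rw [← mul_assoc, ← sq, s3sq]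
      linarith
    have hchain : 3 + x ≤ Real.sqrt 3 * ‖d + s‖ := by
      have e1 : Real.sqrt 3 * (‖d‖ - ‖s‖) = Real.sqrt 3 * ‖d‖ - Real.sqrt 3 * ‖s‖ :=
        mul_sub _ _ _
      linarith
    by_contra hcon
    push_neg at hcon
    have hfin := mul_le_mul_of_nonneg_left hcon s3
    rw [mul_one] at hfin
    linarith

theorem croft_tortoise_one_avoiding
    (u w : EuclideanSpace ℝ (Fin 2))
    (hind : LinearIndependent ℝ ![u, w])
    (x : ℝ) (hx : 0 < x) (hx1 : x < 1)
    (hu : ‖u‖ = 1 + x) (hw : ‖w‖ = 1 + x)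
    (huw : (inner ℝ u w : ℝ) = (1 + x) ^ 2 * Real.cos (Real.pi / 3))
    (T : Set (EuclideanSpace ℝ (Fin 2)))
    (hT : T = Metric.ball 0 (1/2) ∩
      {p | |(inner ℝ p u : ℝ)| < x * (1 + x) / 2} ∩
      {p | |(inner ℝ p w : ℝ)| < x * (1 + x) / 2} ∩
      {p | |(inner ℝ p (w - u) : ℝ)| < x * (1 + x) / 2}) :
    (∀ a b : ℤ, ∀ p ∈ (fun t => ((a:ℝ) • u + (b:ℝ) • w) + t) '' T,
      ∀ q ∈ (fun t => ((a:ℝ) • u + (b:ℝ) • w) + t) '' T, dist p q < 1) ∧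
    (∀ a b a' b' : ℤ, (a, b) ≠ (a', b') →
      ∀ p ∈ (fun t => ((a:ℝ) • u + (b:ℝ) • w) + t) '' T,
      ∀ q ∈ (fun t => ((a':ℝ) • u + (b':ℝ) • w) + t) '' T, dist p q ≠ 1) := by
  have hL : (0:ℝ) < 1 + x := by linarith
  rw [Real.cos_pi_div_three] at huw
  have hvw : (inner ℝ u w : ℝ) = (1+x)^2/2 := by rw [huw]; ring
  subst hT
  have hmem : ∀ t : EuclideanSpace ℝ (Fin 2),
      t ∈ Metric.ball (0 : EuclideanSpace ℝ (Fin 2)) (1/2) ∩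
        {p | |(inner ℝ p u : ℝ)| < x * (1 + x) / 2} ∩
        {p | |(inner ℝ p w : ℝ)| < x * (1 + x) / 2} ∩
        {p | |(inner ℝ p (w - u) : ℝ)| < x * (1 + x) / 2} →
      ‖t‖ < 1/2 ∧ |(inner ℝ t u : ℝ)| < x * (1 + x) / 2 ∧
        |(inner ℝ t w : ℝ)| < x * (1 + x) / 2 ∧
        |(inner ℝ t (w - u) : ℝ)| < x * (1 + x) / 2 := by
    intro t ht
    exact ⟨mem_ball_zero_iff.mp ht.1.1.1, ht.1.1.2, ht.1.2, ht.2⟩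
  constructor
  · rintro a b p ⟨t, ht, rfl⟩ q ⟨t', ht', rfl⟩
    obtain ⟨hb, _, _, _⟩ := hmem t ht
    obtain ⟨hb', _, _, _⟩ := hmem t' ht'
    simp only
    rw [dist_eq_norm, show ((a:ℝ) • u + (b:ℝ) • w + t) - ((a:ℝ) • u + (b:ℝ) • w + t')
      = t - t' by abel]
    calc ‖t - t'‖ ≤ ‖t‖ + ‖t'‖ := norm_sub_le _ _
      _ < 1 := by linarith
  · rintro a b a' b' hne p ⟨t, ht, rfl⟩ q ⟨t', ht', rfl⟩
    obtain ⟨hb, htu, htw, htwu⟩ := hmem t ht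
    obtain ⟨hb', htu', htw', htwu'⟩ := hmem t' ht'
    have huu : (inner ℝ u u : ℝ) = (1+x)^2 := by rw [real_inner_self_eq_norm_sq, hu]
    have hww : (inner ℝ w w : ℝ) = (1+x)^2 := by rw [real_inner_self_eq_norm_sq, hw]
    set m : ℤ := a - a' with hmdef
    set n : ℤ := b - b' with hndef
    have hmn : ¬(m = 0 ∧ n = 0) := by
      rintro ⟨h1, h2⟩
      exact hne (Prod.ext (by omega) (by omega))
    have hvec : ((a:ℝ) • u + (b:ℝ) • w + t) - ((a':ℝ) • u + (b':ℝ) • w + t')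
        = ((m:ℝ) • u + (n:ℝ) • w) + (t - t') := by
      have hm : (m:ℝ) = (a:ℝ) - (a':ℝ) := by rw [hmdef]; push_cast; ring
      have hn : (n:ℝ) = (b:ℝ) - (b':ℝ) := by rw [hndef]; push_cast; ring
      rw [hm, hn]; module
    set s : EuclideanSpace ℝ (Fin 2) := t - t' with hsdef
    have hsu : |(inner ℝ s u : ℝ)| < x*(1+x) := by
      rw [hsdef, inner_sub_left]
      calc |(inner ℝ t u : ℝ) - (inner ℝ t' u : ℝ)| ≤ |(inner ℝ t u : ℝ)| + |(inner ℝ t' u : ℝ)| :=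
        abs_sub _ _
        _ < x*(1+x) := by linarith
    have hsw : |(inner ℝ s w : ℝ)| < x*(1+x) := by
      rw [hsdef, inner_sub_left]
      calc |(inner ℝ t w : ℝ) - (inner ℝ t' w : ℝ)| ≤ |(inner ℝ t w : ℝ)| + |(inner ℝ t' w : ℝ)| :=
        abs_sub _ _
        _ < x*(1+x) := by linarith
    have hswu : |(inner ℝ s (w-u) : ℝ)| < x*(1+x) := by
      rw [hsdef, inner_sub_left]
      calc |(inner ℝ t (w-u) : ℝ) - (inner ℝ t' (w-u) : ℝ)|
          ≤ |(inner ℝ t (w-u) : ℝ)| + |(inner ℝ t' (w-u) : ℝ)| := abs_sub _ _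
        _ < x*(1+x) := by linarith
    have s3 : (0:ℝ) ≤ Real.sqrt 3 := Real.sqrt_nonneg 3
    have s3sq : Real.sqrt 3 ^ 2 = 3 := Real.sq_sqrt (by norm_num)
    have hnt : Real.sqrt 3 * ‖t‖ ≤ x := by
      have h2 := tortoise_norm_sq hind hx huu hww hvw htu.le htw.le htwu.le
      apply le_of_pow_le_pow_left₀ two_ne_zero hx.le
      rw [mul_pow, s3sq]
      nlinarith
    have hnt' : Real.sqrt 3 * ‖t'‖ ≤ x := by
      have h2 := tortoise_norm_sq hind hx huu hww hvw htu'.le htw'.le htwu'.le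
      apply le_of_pow_le_pow_left₀ two_ne_zero hx.le
      rw [mul_pow, s3sq]
      nlinarith
    have hs : Real.sqrt 3 * ‖s‖ ≤ 2*x := by
      have := norm_sub_le t t'
      have e1 := mul_le_mul_of_nonneg_left this s3
      rw [mul_add] at e1
      rw [hsdef]
      linarith
    have key := croft_key u w x hx hu hw hvw m n hmn s hsu hsw hswu hs
    simp only
    rw [dist_eq_norm, hvec]
    exact ne_of_gt key
end
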